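/- Let γ be a non-simple positive real affine root with ℓ(s_γ) = 2ht(γ∨) − 1, and let η be a positive real affine root with ℓ(s_γ s_η) = ℓ(s_γ) − 1. Then ⟨η, γ∨⟩ = 1. -/
import Mathlib


/-- Elements of the affine root lattice (resp. affine coroot lattice) of the affine
(untwisted) Kac–Moody root system, written in coordinates with respect to the simple
roots `α_0, …, α_n` (resp. the simple coroots `α_0∨, …, α_n∨`).  The dominance
(partial) order `a ≤ b` (meaning `b - a` is a nonnegative combination of the simple
roots/coroots) is the coordinatewise order. -/
abbrev AffLat (n : ℕ) := Fin (n + 1) → ℤ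

/-- The `i`-th simple root (resp. simple coroot) as a coordinate vector. -/
def simpleVec {n : ℕ} (i : Fin (n + 1)) : AffLat n := Pi.single i 1

/-- The height of a root (resp. coroot): the sum of its coordinates in the basis of
simple roots (resp. simple coroots). -/
def htv {n : ℕ} (a : AffLat n) : ℤ := ∑ j, a j

/-- `a` is a simple root (a standard basis vector). -/
def IsSimpleVec {n : ℕ} (a : AffLat n) : Prop := ∃ i, a = simpleVec i

/-- Axiomatization of the affine (untwisted) Kac–Moody root system attached to a
finite simple Lie algebra, together with its affine Weyl group `W` (a Coxeter group
with simple reflections `s_0, …, s_n`), its action on the root and coroot lattices,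
the coroot map `α ↦ α∨` on real roots, the reflection map `α ↦ s_α`, and the
imaginary coroot `c = α_0∨ + θ∨`. -/
structure AffineRootSystem (n : ℕ) (W : Type*) [Group W] where
  /-- the affine Cartan matrix: `cartan i j = ⟨α_j, α_i∨⟩` -/
  cartan : Fin (n + 1) → Fin (n + 1) → ℤ
  cartan_diag : ∀ i, cartan i i = 2
  cartan_offdiag : ∀ i j, i ≠ j → cartan i j ≤ 0
  cartan_symm_zero : ∀ i j, cartan i j = 0 → cartan j i = 0
  /-- the Coxeter matrix of the affine Weyl group -/
  M : CoxeterMatrix (Fin (n + 1))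
  /-- the affine Weyl group, as a Coxeter system with simple reflections
  `cs.simple 0, …, cs.simple n` and Coxeter length `cs.length` -/
  cs : CoxeterSystem M W
  /-- the action of the affine Weyl group on the root lattice -/
  actR : W → AffLat n → AffLat n
  actR_one : ∀ a, actR 1 a = a
  actR_mul : ∀ u v a, actR (u * v) a = actR u (actR v a)
  actR_add : ∀ w a b, actR w (a + b) = actR w a + actR w b
  actR_simple : ∀ i a, actR (cs.simple i) a = a - (∑ k, cartan i k * a k) • simpleVec i
  /-- the action of the affine Weyl group on the coroot lattice -/
  actC : W → AffLat n → AffLat n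
  actC_one : ∀ b, actC 1 b = b
  actC_mul : ∀ u v b, actC (u * v) b = actC u (actC v b)
  actC_add : ∀ w a b, actC w (a + b) = actC w a + actC w b
  actC_simple : ∀ i b, actC (cs.simple i) b = b - (∑ k, cartan k i * b k) • simpleVec i
  /-- the coroot `α∨` of a real root `α` -/
  coroot : AffLat n → AffLat n
  coroot_simple : ∀ i, coroot (simpleVec i) = simpleVec i
  coroot_act : ∀ w a, coroot (actR w a) = actC w (coroot a)
  /-- the reflection `s_α ∈ W` of a real root `α` -/
  refl : AffLat n → W
  refl_simple : ∀ i, refl (simpleVec i) = cs.simple i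
  refl_act : ∀ w a, refl (actR w a) = w * refl a * w⁻¹
  /-- the coordinates of the imaginary coroot `c = α_0∨ + θ∨` in the basis of simple
  coroots; thus `imag 0 = 1` and `imag i = m_i` for `i ≥ 1`, where
  `θ∨ = m_1 α_1∨ + ⋯ + m_n α_n∨` -/
  imag : AffLat n
  imag_zero : imag 0 = 1
  imag_pos : ∀ i, 1 ≤ imag i
  imag_invariant : ∀ w, actC w imag = imag
  /-- the standard relation between lengths and positivity of roots:
  `ℓ(w s_α) < ℓ(w)` iff `w(α) < 0` -/
  length_refl_lt_iff : ∀ a : AffLat n, (∃ w i, a = actR w (simpleVec i)) → 0 ≤ a →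
    ∀ w : W, cs.length (w * refl a) < cs.length w ↔ actR w a ≤ 0

namespace AffineRootSystem

variable {n : ℕ} {W : Type*} [Group W] (R : AffineRootSystem n W)

/-- `α` is a positive real root of the affine root system. -/
def IsPosRoot (a : AffLat n) : Prop := (∃ w i, a = R.actR w (simpleVec i)) ∧ 0 ≤ a

/-- The evaluation pairing `⟨α, β∨⟩` of a root `α` (coordinates w.r.t. the simple
roots) against a coroot `β∨` (coordinates w.r.t. the simple coroots), computed via
the affine Cartan matrix `cartan i k = ⟨α_k, α_i∨⟩`. -/
def pairing (a b : AffLat n) : ℤ := ∑ i, ∑ k, b i * (R.cartan i k * a k)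

/-- `α` belongs to the set `Π̃` of positive real roots with `ℓ(s_α) = 2 ht(α∨) - 1`
(the roots appearing in the affine quantum Chevalley formula). -/
def IsChevalleyRoot (a : AffLat n) : Prop :=
  R.IsPosRoot a ∧ (R.cs.length (R.refl a) : ℤ) = 2 * htv (R.coroot a) - 1

end AffineRootSystem

namespace AffineRootSystem

variable {n : ℕ} {W : Type*} [Group W] (R : AffineRootSystem n W)

/-- `a` is a real root. -/
def IsRealRoot (a : AffLat n) : Prop := ∃ w i, a = R.actR w (simpleVec i)

/-- The action on the root lattice as an additive homomorphism. -/
def actRHom (w : W) : AffLat n →+ AffLat n := AddMonoidHom.mk' (R.actR w) (R.actR_add w)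

/-- The action on the coroot lattice as an additive homomorphism. -/
def actCHom (w : W) : AffLat n →+ AffLat n := AddMonoidHom.mk' (R.actC w) (R.actC_add w)

lemma actR_zsmul (w : W) (z : ℤ) (a : AffLat n) : R.actR w (z • a) = z • R.actR w a := by
  simpa [actRHom] using map_zsmul (R.actRHom w) z a

lemma actR_neg (w : W) (a : AffLat n) : R.actR w (-a) = - R.actR w a := by
  simpa [actRHom] using map_neg (R.actRHom w) a

lemma actR_sub (w : W) (a b : AffLat n) : R.actR w (a - b) = R.actR w a - R.actR w b := by
  simpa [actRHom] using map_sub (R.actRHom w) a b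

lemma actC_zsmul (w : W) (z : ℤ) (a : AffLat n) : R.actC w (z • a) = z • R.actC w a := by
  simpa [actCHom] using map_zsmul (R.actCHom w) z a

lemma actC_sub (w : W) (a b : AffLat n) : R.actC w (a - b) = R.actC w a - R.actC w b := by
  simpa [actCHom] using map_sub (R.actCHom w) a b

lemma actR_actR_inv (w : W) (a : AffLat n) : R.actR w (R.actR w⁻¹ a) = a := by
  rw [← R.actR_mul, mul_inv_cancel, R.actR_one]

lemma actR_inv_actR (w : W) (a : AffLat n) : R.actR w⁻¹ (R.actR w a) = a := by
  rw [← R.actR_mul, inv_mul_cancel, R.actR_one]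

lemma pairing_add_left (a a' b : AffLat n) :
    R.pairing (a + a') b = R.pairing a b + R.pairing a' b := by
  simp [pairing, mul_add, Finset.sum_add_distrib]

lemma pairing_add_right (a b b' : AffLat n) :
    R.pairing a (b + b') = R.pairing a b + R.pairing a b' := by
  simp [pairing, add_mul, Finset.sum_add_distrib]

lemma pairing_zsmul_left (z : ℤ) (a b : AffLat n) :
    R.pairing (z • a) b = z * R.pairing a b := by
  simp only [pairing, Pi.smul_apply, smul_eq_mul, Finset.mul_sum]
  refine Finset.sum_congr rfl fun i _ => Finset.sum_congr rfl fun k _ => by ring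

lemma pairing_zsmul_right (z : ℤ) (a b : AffLat n) :
    R.pairing a (z • b) = z * R.pairing a b := by
  simp only [pairing, Pi.smul_apply, smul_eq_mul, Finset.mul_sum]
  refine Finset.sum_congr rfl fun i _ => Finset.sum_congr rfl fun k _ => by ring

lemma pairing_sub_left (a a' b : AffLat n) :
    R.pairing (a - a') b = R.pairing a b - R.pairing a' b := by
  have h := R.pairing_add_left (a - a') a' b
  simp only [sub_add_cancel] at h
  omega

lemma pairing_sub_right (a b b' : AffLat n) :
    R.pairing a (b - b') = R.pairing a b - R.pairing a b' := by
  have h := R.pairing_add_right a (b - b') b'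
  simp only [sub_add_cancel] at h
  omega

lemma pairing_simple_right (a : AffLat n) (i : Fin (n + 1)) :
    R.pairing a (simpleVec i) = ∑ k, R.cartan i k * a k := by
  simp [pairing, simpleVec, Pi.single_apply, ite_mul, Finset.sum_ite_eq]

lemma pairing_simple_left (i : Fin (n + 1)) (b : AffLat n) :
    R.pairing (simpleVec i) b = ∑ j, R.cartan j i * b j := by
  simp only [pairing, simpleVec, Pi.single_apply, mul_ite, mul_one, mul_zero,
    Finset.sum_ite_eq', Finset.mem_univ, if_true]
  refine Finset.sum_congr rfl fun j _ => by ring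

lemma pairing_simple_simple (k i : Fin (n + 1)) :
    R.pairing (simpleVec k) (simpleVec i) = R.cartan i k := by
  rw [pairing_simple_right]
  simp [simpleVec, Pi.single_apply, mul_ite, Finset.sum_ite_eq']

lemma actR_simple' (i : Fin (n + 1)) (a : AffLat n) :
    R.actR (R.cs.simple i) a = a - (R.pairing a (simpleVec i)) • simpleVec i := by
  rw [R.actR_simple, pairing_simple_right]

lemma actC_simple' (i : Fin (n + 1)) (b : AffLat n) :
    R.actC (R.cs.simple i) b = b - (R.pairing (simpleVec i) b) • simpleVec i := by
  rw [R.actC_simple, pairing_simple_left]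

lemma pairing_invariant (w : W) : ∀ a b : AffLat n,
    R.pairing (R.actR w a) (R.actC w b) = R.pairing a b := by
  refine R.cs.simple_induction (p := fun w => ∀ a b : AffLat n,
    R.pairing (R.actR w a) (R.actC w b) = R.pairing a b) w ?_ ?_ ?_
  · intro i a b
    rw [actR_simple', actC_simple']
    rw [pairing_sub_left, pairing_sub_right, pairing_sub_right, pairing_zsmul_left,
      pairing_zsmul_right, pairing_zsmul_right, pairing_zsmul_left, pairing_simple_simple,
      R.cartan_diag]
    ring
  · intro a b
    rw [R.actR_one, R.actC_one]
  · intro u v hu hv a b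
    rw [R.actR_mul, R.actC_mul, hu, hv]

lemma refl_conj (w : W) (i : Fin (n + 1)) :
    R.refl (R.actR w (simpleVec i)) = w * R.cs.simple i * w⁻¹ := by
  rw [R.refl_act, R.refl_simple]

lemma pairing_coroot_self {a : AffLat n} (ha : R.IsRealRoot a) :
    R.pairing a (R.coroot a) = 2 := by
  obtain ⟨w, i, rfl⟩ := ha
  rw [R.coroot_act, R.coroot_simple, pairing_invariant, pairing_simple_simple, R.cartan_diag]

lemma root_ne_zero {a : AffLat n} (ha : R.IsRealRoot a) : a ≠ 0 := by
  obtain ⟨w, i, rfl⟩ := ha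
  intro h
  have h2 : R.actR w⁻¹ (R.actR w (simpleVec i)) = simpleVec i := by
    rw [← R.actR_mul, inv_mul_cancel, R.actR_one]
  rw [h] at h2
  have h3 : R.actR w⁻¹ 0 = 0 := by
    simpa [actRHom] using map_zero (R.actRHom w⁻¹)
  rw [h3] at h2
  have := congrFun h2 i
  simp [simpleVec] at this

lemma actR_refl_apply {a : AffLat n} (ha : R.IsRealRoot a) (x : AffLat n) :
    R.actR (R.refl a) x = x - R.pairing x (R.coroot a) • a := by
  obtain ⟨w, i, rfl⟩ := ha
  rw [refl_conj, R.actR_mul, R.actR_mul, actR_simple', actR_sub, actR_zsmul, actR_actR_inv]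
  congr 2
  rw [R.coroot_act, R.coroot_simple]
  conv_rhs => rw [← R.actR_actR_inv w x]
  rw [pairing_invariant]

lemma actC_refl_apply {a : AffLat n} (ha : R.IsRealRoot a) (y : AffLat n) :
    R.actC (R.refl a) y = y - R.pairing a y • R.coroot a := by
  obtain ⟨w, i, rfl⟩ := ha
  have hy : R.actC w (R.actC w⁻¹ y) = y := by rw [← R.actC_mul, mul_inv_cancel, R.actC_one]
  rw [refl_conj, R.actC_mul, R.actC_mul, actC_simple', actC_sub, actC_zsmul, hy,
    R.coroot_act, R.coroot_simple]
  congr 2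
  have h5 := R.pairing_invariant w⁻¹ (R.actR w (simpleVec i)) y
  rw [actR_inv_actR] at h5
  exact h5

lemma refl_mul_self {a : AffLat n} (ha : R.IsRealRoot a) : R.refl a * R.refl a = 1 := by
  obtain ⟨w, i, rfl⟩ := ha
  rw [refl_conj]
  simp [mul_assoc, R.cs.simple_mul_simple_cancel_left]

lemma refl_inv {a : AffLat n} (ha : R.IsRealRoot a) : (R.refl a)⁻¹ = R.refl a :=
  inv_eq_of_mul_eq_one_right (R.refl_mul_self ha)

lemma actR_refl_self {a : AffLat n} (ha : R.IsRealRoot a) : R.actR (R.refl a) a = -a := by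
  rw [actR_refl_apply R ha, pairing_coroot_self R ha]
  module

lemma refl_ne_one {a : AffLat n} (ha : R.IsRealRoot a) : R.refl a ≠ 1 := by
  intro h
  have h1 := R.actR_refl_self ha
  rw [h, R.actR_one] at h1
  have : a = 0 := funext fun j => by
    have h2 := congrFun h1 j
    simp only [Pi.neg_apply] at h2
    show a j = 0
    omega
  exact R.root_ne_zero ha this

lemma simpleVec_nonneg (i : Fin (n + 1)) : (0 : AffLat n) ≤ simpleVec i := by
  intro j
  by_cases h : j = i <;> simp [simpleVec, Pi.single_apply, h]

lemma isRealRoot_simple (i : Fin (n + 1)) : R.IsRealRoot (simpleVec i) :=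
  ⟨1, i, (R.actR_one _).symm⟩

lemma isRealRoot_actR {a : AffLat n} (ha : R.IsRealRoot a) (u : W) :
    R.IsRealRoot (R.actR u a) := by
  obtain ⟨w, i, rfl⟩ := ha
  exact ⟨u * w, i, by rw [R.actR_mul]⟩

/-- Sign dichotomy for real roots. -/
lemma root_dichotomy {a : AffLat n} (ha : R.IsRealRoot a) : 0 ≤ a ∨ a ≤ 0 := by
  obtain ⟨w, i, rfl⟩ := ha
  have hax := R.length_refl_lt_iff (simpleVec i) (R.isRealRoot_simple i) (simpleVec_nonneg i)
  rw [R.refl_simple] at hax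
  rcases Nat.lt_or_ge (R.cs.length (w * R.cs.simple i)) (R.cs.length w) with hlt | hge
  · right
    exact (hax w).mp hlt
  · left
    have hne := R.cs.length_mul_simple_ne w i
    have h2 : R.cs.length ((w * R.cs.simple i) * R.cs.simple i) < R.cs.length (w * R.cs.simple i) := by
      rw [R.cs.simple_mul_simple_cancel_right]
      omega
    have h3 := (hax (w * R.cs.simple i)).mp h2
    have h4 : R.actR (w * R.cs.simple i) (simpleVec i) = - R.actR w (simpleVec i) := by
      rw [R.actR_mul, actR_simple', pairing_simple_simple, R.cartan_diag]
      rw [show simpleVec i - (2:ℤ) • simpleVec i = -simpleVec i by module, actR_neg]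
    rw [h4] at h3
    intro j
    simpa using neg_nonpos.mp (h3 j)

/-- A nonnegative real root whose reflection is simple is the corresponding simple root. -/
lemma eq_simple_of_refl_eq {a : AffLat n} (ha : R.IsRealRoot a) (hpos : 0 ≤ a)
    {i : Fin (n + 1)} (h : R.refl a = R.cs.simple i) :
    a = simpleVec i ∧ R.coroot a = simpleVec i := by
  have h1 : ∀ x : AffLat n, x - R.pairing x (R.coroot a) • a
      = x - R.pairing x (simpleVec i) • simpleVec i := by
    intro x
    rw [← actR_refl_apply R ha, h, actR_simple']
  have h2 : ∀ y : AffLat n, y - R.pairing a y • R.coroot a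
      = y - R.pairing (simpleVec i) y • simpleVec i := by
    intro y
    rw [← actC_refl_apply R ha, h, actC_simple']
  have e1 : R.pairing (simpleVec i) (R.coroot a) • a = (2 : ℤ) • simpleVec i := by
    have h3 := h1 (simpleVec i)
    rw [pairing_simple_simple, R.cartan_diag] at h3
    exact sub_right_inj.mp h3
  have e2 : R.pairing a (simpleVec i) • R.coroot a = (2 : ℤ) • simpleVec i := by
    have h3 := h2 (simpleVec i)
    rw [pairing_simple_simple, R.cartan_diag] at h3
    exact sub_right_inj.mp h3
  have e1' : ∀ j, R.pairing (simpleVec i) (R.coroot a) * a j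
      = 2 * (if j = i then 1 else 0) := by
    intro j
    have := congrFun e1 j
    simpa [simpleVec, Pi.single_apply] using this
  have e2' : ∀ j, R.pairing a (simpleVec i) * R.coroot a j
      = 2 * (if j = i then 1 else 0) := by
    intro j
    have := congrFun e2 j
    simpa [simpleVec, Pi.single_apply] using this
  have hr : R.pairing (simpleVec i) (R.coroot a) * a i = 2 := by simpa using e1' i
  have haj : ∀ j, j ≠ i → a j = 0 := by
    intro j hj
    have h3 := e1' j
    rw [if_neg hj, mul_zero] at h3
    rcases mul_eq_zero.mp h3 with h4 | h4
    · rw [h4, zero_mul] at hr; omega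
    · exact h4
  have hp : R.pairing a (simpleVec i) = 2 * a i := by
    rw [pairing_simple_right, Finset.sum_eq_single i]
    · rw [R.cartan_diag]
    · intro k _ hk
      rw [haj k hk, mul_zero]
    · simp
  have hai : a i * R.coroot a i = 1 := by
    have h3 := e2' i
    rw [hp, if_pos rfl, mul_one] at h3
    have h4 : 2 * (a i * R.coroot a i) = 2 * 1 := by linear_combination h3
    exact mul_left_cancel₀ two_ne_zero h4
  have hai1 : a i = 1 := by
    rcases Int.eq_one_or_neg_one_of_mul_eq_one' hai with ⟨h4, _⟩ | ⟨h4, _⟩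
    · exact h4
    · have h5 : (0:ℤ) ≤ a i := hpos i
      omega
  constructor
  · funext j
    by_cases hj : j = i
    · subst hj; simp [simpleVec, hai1]
    · simp [simpleVec, Pi.single_apply, hj, haj j hj]
  · funext j
    have h3 := e2' j
    rw [hp, hai1] at h3
    simp [simpleVec, Pi.single_apply]
    by_cases hj : j = i <;> simp [hj] at h3 ⊢ <;> omega

lemma actR_simple_self (i : Fin (n + 1)) :
    R.actR (R.cs.simple i) (simpleVec i) = -simpleVec i := by
  rw [actR_simple', pairing_simple_simple, R.cartan_diag]
  module

lemma htv_sub (a b : AffLat n) : htv (a - b) = htv a - htv b := by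
  simp [htv, Finset.sum_sub_distrib]

lemma htv_zsmul (z : ℤ) (a : AffLat n) : htv (z • a) = z * htv a := by
  simp [htv, Finset.mul_sum]

lemma htv_simpleVec (i : Fin (n + 1)) : htv (simpleVec i) = 1 := by
  simp [htv, simpleVec, Pi.single_apply]

lemma isPosRoot_actR_simple {a : AffLat n} (hp : R.IsPosRoot a) (i : Fin (n + 1))
    (hne : a ≠ simpleVec i) : R.IsPosRoot (R.actR (R.cs.simple i) a) := by
  obtain ⟨ha, hnn⟩ := hp
  have hroot : R.IsRealRoot (R.actR (R.cs.simple i) a) := R.isRealRoot_actR ha _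
  have hnotle : ¬ R.actR (R.cs.simple i) a ≤ 0 := by
    intro hle
    have hax := R.length_refl_lt_iff a ha hnn (R.cs.simple i)
    have h1 : R.cs.length (R.cs.simple i * R.refl a) < R.cs.length (R.cs.simple i) :=
      hax.mpr hle
    rw [R.cs.length_simple] at h1
    have h2 : R.cs.simple i * R.refl a = 1 := R.cs.length_eq_zero_iff.mp (by omega)
    have h3 : R.refl a = R.cs.simple i := by
      rw [eq_inv_of_mul_eq_one_right h2, R.cs.inv_simple]
    exact hne (R.eq_simple_of_refl_eq ha hnn h3).1
  rcases R.root_dichotomy hroot with h | h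
  · exact ⟨hroot, h⟩
  · exact absurd h hnotle

lemma descent_package {a : AffLat n} (hp : R.IsPosRoot a) (i : Fin (n + 1))
    (hd : R.cs.IsLeftDescent (R.refl a) i) (hne : a ≠ simpleVec i) :
    R.IsPosRoot (R.actR (R.cs.simple i) a) ∧
      1 ≤ R.pairing (simpleVec i) (R.coroot a) ∧
      R.cs.length (R.refl (R.actR (R.cs.simple i) a)) + 2 = R.cs.length (R.refl a) := by
  obtain ⟨ha, hnn⟩ := hp
  have hp' : R.IsPosRoot (R.actR (R.cs.simple i) a) := R.isPosRoot_actR_simple ⟨ha, hnn⟩ i hne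
  have hu : (R.refl a)⁻¹ = R.refl a := R.refl_inv ha
  have hrd : R.cs.length (R.refl a * R.cs.simple i) < R.cs.length (R.refl a) := by
    have h1 : R.cs.length (R.refl a * R.cs.simple i)
        = R.cs.length (R.cs.simple i * R.refl a) := by
      conv_lhs => rw [← R.cs.length_inv]
      rw [mul_inv_rev, hu, R.cs.inv_simple]
    rw [h1]
    exact hd
  have haxi := R.length_refl_lt_iff (simpleVec i) (R.isRealRoot_simple i) (simpleVec_nonneg i)
  rw [R.refl_simple] at haxi
  have hneg : R.actR (R.refl a) (simpleVec i) ≤ 0 := (haxi (R.refl a)).mp hrd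
  rw [actR_refl_apply R ha] at hneg
  set c := R.pairing (simpleVec i) (R.coroot a) with hc
  have hc1 : 1 ≤ c := by
    have h2 : simpleVec i i - c * a i ≤ 0 := hneg i
    rw [show simpleVec i i = 1 by simp [simpleVec]] at h2
    have h3 : (0:ℤ) ≤ a i := hnn i
    nlinarith
  have hl1 : R.cs.length (R.cs.simple i * R.refl a) + 1 = R.cs.length (R.refl a) :=
    R.cs.isLeftDescent_iff.mp hd
  have hstep : R.actR (R.cs.simple i * R.refl a) (simpleVec i) ≤ 0 := by
    rw [R.actR_mul, actR_refl_apply R ha, ← hc, actR_sub, actR_zsmul, actR_simple_self]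
    intro j
    have h1 : (0:ℤ) ≤ R.actR (R.cs.simple i) a j := hp'.2 j
    have h2 : (0:ℤ) ≤ simpleVec i j := simpleVec_nonneg i j
    show -simpleVec i j - c * R.actR (R.cs.simple i) a j ≤ 0
    nlinarith
  have hrd2 : R.cs.length ((R.cs.simple i * R.refl a) * R.cs.simple i)
      < R.cs.length (R.cs.simple i * R.refl a) := (haxi _).mpr hstep
  have hl2 : R.cs.length ((R.cs.simple i * R.refl a) * R.cs.simple i) + 1
      = R.cs.length (R.cs.simple i * R.refl a) := R.cs.isRightDescent_iff.mp hrd2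
  have hrefl' : R.refl (R.actR (R.cs.simple i) a)
      = R.cs.simple i * R.refl a * R.cs.simple i := by
    rw [R.refl_act, R.cs.inv_simple]
  refine ⟨hp', hc1, ?_⟩
  rw [hrefl']
  omega

lemma one_le_htv_and_length_le :
    ∀ (L : ℕ) (a : AffLat n), R.cs.length (R.refl a) = L → R.IsPosRoot a →
      1 ≤ htv (R.coroot a) ∧ (R.cs.length (R.refl a) : ℤ) ≤ 2 * htv (R.coroot a) - 1 := by
  intro L
  induction L using Nat.strong_induction_on with
  | _ L IH =>
    intro a hL hp
    by_cases hsimp : IsSimpleVec a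
    · obtain ⟨i, rfl⟩ := hsimp
      rw [R.refl_simple, R.coroot_simple, R.cs.length_simple, htv_simpleVec]
      norm_num
    · have hne1 : R.refl a ≠ 1 := R.refl_ne_one hp.1
      obtain ⟨i, hd⟩ := R.cs.exists_leftDescent_of_ne_one hne1
      have hnei : a ≠ simpleVec i := fun h => hsimp ⟨i, h⟩
      obtain ⟨hp', hc1, hlen2⟩ := R.descent_package hp i hd hnei
      have hcor : htv (R.coroot (R.actR (R.cs.simple i) a))
          = htv (R.coroot a) - R.pairing (simpleVec i) (R.coroot a) := by
        rw [R.coroot_act, actC_simple', htv_sub, htv_zsmul, htv_simpleVec, mul_one]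
      obtain ⟨ih1, ih2⟩ := IH (R.cs.length (R.refl (R.actR (R.cs.simple i) a)))
        (by omega) _ rfl hp'
      constructor
      · omega
      · omega

lemma chevalley_descent {a : AffLat n} (hg : R.IsChevalleyRoot a) (hns : ¬ IsSimpleVec a)
    (i : Fin (n + 1)) (hd : R.cs.IsLeftDescent (R.refl a) i) :
    R.pairing (simpleVec i) (R.coroot a) = 1 ∧
      R.IsChevalleyRoot (R.actR (R.cs.simple i) a) ∧
      R.cs.length (R.refl (R.actR (R.cs.simple i) a)) + 2 = R.cs.length (R.refl a) := by
  obtain ⟨hp, heq⟩ := hg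
  have hnei : a ≠ simpleVec i := fun h => hns ⟨i, h⟩
  obtain ⟨hp', hc1, hlen2⟩ := R.descent_package hp i hd hnei
  have hcor : htv (R.coroot (R.actR (R.cs.simple i) a))
      = htv (R.coroot a) - R.pairing (simpleVec i) (R.coroot a) := by
    rw [R.coroot_act, actC_simple', htv_sub, htv_zsmul, htv_simpleVec, mul_one]
  obtain ⟨ih1, ih2⟩ := R.one_le_htv_and_length_le
    (R.cs.length (R.refl (R.actR (R.cs.simple i) a))) _ rfl hp'
  have hceq : R.pairing (simpleVec i) (R.coroot a) = 1 := by omega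
  refine ⟨hceq, ⟨hp', ?_⟩, hlen2⟩
  rw [hcor, hceq]
  omega

end AffineRootSystem

/-- Let `γ` be a non-simple positive real affine root with
`ℓ(s_γ) = 2 ht(γ∨) - 1`, and let `η` be a positive real affine root with
`ℓ(s_γ s_η) = ℓ(s_γ) - 1`.  Then `⟨η, γ∨⟩ = 1`. -/
theorem pairing_eq_one_of_length_pred {n : ℕ} {W : Type*} [Group W]
    (R : AffineRootSystem n W) (g e : AffLat n)
    (hg : R.IsChevalleyRoot g) (hgns : ¬ IsSimpleVec g)
    (he : R.IsPosRoot e)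
    (hlen : R.cs.length (R.refl g * R.refl e) + 1 = R.cs.length (R.refl g)) :
    R.pairing e (R.coroot g) = 1 := by
  open AffineRootSystem in
  suffices H : ∀ (L : ℕ) (g e : AffLat n), R.cs.length (R.refl g) = L →
      R.IsChevalleyRoot g → ¬ IsSimpleVec g → R.IsPosRoot e →
      R.cs.length (R.refl g * R.refl e) + 1 = R.cs.length (R.refl g) →
      R.pairing e (R.coroot g) = 1 from H _ g e rfl hg hgns he hlen
  clear hg hgns he hlen g e
  intro L
  induction L using Nat.strong_induction_on with
  | _ L IH =>
    intro g e hL hg hgns he hlen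
    have hrg : R.IsRealRoot g := hg.1.1
    have hgnn : (0 : AffLat n) ≤ g := hg.1.2
    have hre : R.IsRealRoot e := he.1
    have henn : (0 : AffLat n) ≤ e := he.2
    set k := R.pairing e (R.coroot g) with hk
    have hneg : R.actR (R.refl g) e ≤ 0 :=
      (R.length_refl_lt_iff e hre henn (R.refl g)).mp (by omega)
    have hform : R.actR (R.refl g) e = e - k • g := R.actR_refl_apply hrg e
    rw [hform] at hneg
    have hk1 : 1 ≤ k := by
      by_contra hcon
      push_neg at hcon
      have h0 : e = 0 := funext fun j => by
        have h1 : e j - k * g j ≤ 0 := hneg j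
        have h2 : (0:ℤ) ≤ e j := henn j
        have h3 : (0:ℤ) ≤ g j := hgnn j
        have h4 : k * g j ≤ 0 := mul_nonpos_of_nonpos_of_nonneg (by omega) h3
        show e j = 0
        omega
      exact R.root_ne_zero hre h0
    obtain ⟨i, hd⟩ := R.cs.exists_leftDescent_of_ne_one (R.refl_ne_one hrg)
    obtain ⟨hc1, hg', hlen2⟩ := R.chevalley_descent hg hgns i hd
    by_cases hei : e = simpleVec i
    · rw [hk, hei]
      exact hc1
    by_cases hbi : k • g - e = simpleVec i
    · have h5 := congrArg (fun v => R.pairing v (R.coroot g)) hbi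
      rw [R.pairing_sub_left, R.pairing_zsmul_left, R.pairing_coroot_self hrg, ← hk, hc1] at h5
      omega
    · set g' := R.actR (R.cs.simple i) g with hg'def
      set e' := R.actR (R.cs.simple i) e with he'def
      have hpe' : R.IsPosRoot e' := R.isPosRoot_actR_simple he i hei
      have hkinv : R.pairing e' (R.coroot g') = k := by
        rw [hg'def, he'def, R.coroot_act, R.pairing_invariant, hk]
    
      have hβr : R.IsRealRoot (k • g - e) := by
        have hh : k • g - e = R.actR (R.refl g * R.refl e) e := by
          rw [R.actR_mul, R.actR_refl_self hre, R.actR_neg, hform]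
          module
        rw [hh]
        exact R.isRealRoot_actR hre _
      have hβpos : R.IsPosRoot (k • g - e) := by
        refine ⟨hβr, fun j => ?_⟩
        have h1 : e j - k * g j ≤ 0 := hneg j
        show (0:ℤ) ≤ k * g j - e j
        omega
      have hβ' : R.IsPosRoot (R.actR (R.cs.simple i) (k • g - e)) :=
        R.isPosRoot_actR_simple hβpos i hbi
      have hneg' : R.actR (R.refl g') e' ≤ 0 := by
        have hform' : R.actR (R.refl g') e' = - R.actR (R.cs.simple i) (k • g - e) := by
          rw [R.actR_refl_apply hg'.1.1 e', hkinv, ← R.actR_neg,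
            show -(k • g - e) = e - k • g by module, R.actR_sub, R.actR_zsmul]
        rw [hform']
        intro j
        have h1 : (0:ℤ) ≤ R.actR (R.cs.simple i) (k • g - e) j := hβ'.2 j
        show - R.actR (R.cs.simple i) (k • g - e) j ≤ 0
        omega
      have hlt' : R.cs.length (R.refl g' * R.refl e') < R.cs.length (R.refl g') :=
        (R.length_refl_lt_iff e' hpe'.1 hpe'.2 (R.refl g')).mpr hneg'
      have hconj : R.cs.simple i * (R.refl g' * R.refl e') * R.cs.simple i
          = R.refl g * R.refl e := by
        rw [hg'def, he'def, R.refl_act, R.refl_act, R.cs.inv_simple]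
        simp only [mul_assoc, R.cs.simple_mul_simple_cancel_left]
        rw [← mul_assoc, ← mul_assoc]
        simp only [mul_assoc, R.cs.simple_mul_simple_cancel_left]
        rw [R.cs.simple_mul_simple_self, mul_one]
      have hlow : R.cs.length (R.refl g * R.refl e)
          ≤ R.cs.length (R.refl g' * R.refl e') + 2 := by
        have t1 := R.cs.length_mul_le (R.cs.simple i * (R.refl g' * R.refl e')) (R.cs.simple i)
        have t2 := R.cs.length_mul_le (R.cs.simple i) (R.refl g' * R.refl e')
        rw [hconj] at t1
        have t3 := R.cs.length_simple i
        omega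
      have hlen' : R.cs.length (R.refl g' * R.refl e') + 1 = R.cs.length (R.refl g') := by
        omega
      by_cases hgs : IsSimpleVec g'
      · exfalso
        obtain ⟨j, hj⟩ := hgs
        have hreflg' : R.refl g' = R.cs.simple j := by rw [hj, R.refl_simple]
        have hlg'1 : R.cs.length (R.refl g') = 1 := by rw [hreflg', R.cs.length_simple]
        have h0 : R.cs.length (R.refl g' * R.refl e') = 0 := by omega
        have h1 : R.refl g' * R.refl e' = 1 := R.cs.length_eq_zero_iff.mp h0
        have h2 : R.refl e' = R.cs.simple j := by
          rw [eq_inv_of_mul_eq_one_right h1, hreflg', R.cs.inv_simple]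
        have he'j : e' = simpleVec j := (R.eq_simple_of_refl_eq hpe'.1 hpe'.2 h2).1
        have heg : e = g := by
          have h3 : R.actR (R.cs.simple i) e' = R.actR (R.cs.simple i) g' := by
            rw [he'j, hj]
          rw [he'def, hg'def, ← R.actR_mul, ← R.actR_mul,
            R.cs.simple_mul_simple_self, R.actR_one, R.actR_one] at h3
          exact h3
        have h4 : R.refl g * R.refl e = 1 := by rw [heg]; exact R.refl_mul_self hrg
        rw [h4] at hlen
        have h5 : R.cs.length (1:W) = 0 := R.cs.length_eq_zero_iff.mpr rfl
        have h6 : R.cs.length (R.refl g) = 1 := by omega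
        obtain ⟨t, ht⟩ := R.cs.length_eq_one_iff.mp h6
        exact hgns ⟨t, (R.eq_simple_of_refl_eq hrg hgnn ht).1⟩
      · rw [← hkinv]
        exact IH (R.cs.length (R.refl g')) (by omega) g' e' rfl hg' hgs hpe' hlen'
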